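/- arXiv:1605.01384 — 8 statements merged into one kernel-verified Lean document; each statement's English description precedes it below -/
import Mathlib

section
/- Let (Ω, 𝓕, P) be a probability space, d ≥ 1, and let b : ℝ^d → ℝ^d be continuous and satisfy the one-sided Lipschitz condition with constant m > 0, i.e. ⟨b(x) − b(y), x − y⟩ ≤ −m‖x − y‖² for all x, y. Let W, X, Y : [0,∞) × Ω → ℝ^d be stochastic processes with continuous sample paths such that almost surely, for all t ≥ 0, X_t = X_0 + ∫₀ᵗ b(X_s) ds + √2 W_t and Y_t = Y_0 + ∫₀ᵗ b(Y_s) ds + √2 W_t. If E‖X_0 − Y_0‖² < ∞, then for every T ≥ 0, E‖X_T − Y_T‖² ≤ e^{−2mT} E‖X_0 − Y_0‖². -/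
open MeasureTheory Set
open scoped RealInnerProductSpace

/-!
Pathwise, the common noise cancels in `X - Y`, which is therefore differentiable with derivative
`b X - b Y`. By the one-sided Lipschitz condition `t ↦ exp (2 m t) ‖X t - Y t‖²` is nonincreasing,
and integrating this pathwise bound over `ω` gives the mean-square contraction.
-/

section Contraction

variable {E : Type*} [NormedAddCommGroup E] [InnerProductSpace ℝ E]

theorem norm_sq_le_exp_mul_of_inner_deriv_le {ζ ζ' : ℝ → E} {m T : ℝ} (hT : 0 ≤ T)
    (hζ : ∀ t, HasDerivAt ζ (ζ' t) t)
    (hineq : ∀ t ∈ Ioo 0 T, ⟪ζ' t, ζ t⟫ ≤ -m * ‖ζ t‖ ^ 2) :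
    ‖ζ T‖ ^ 2 ≤ Real.exp (-(2 * m) * T) * ‖ζ 0‖ ^ 2 := by
  set ψ : ℝ → ℝ := fun t => Real.exp (2 * m * t) * ‖ζ t‖ ^ 2
  have hψ : ∀ t, HasDerivAt ψ
      (Real.exp (2 * m * t) * (2 * m * ‖ζ t‖ ^ 2 + 2 * ⟪ζ' t, ζ t⟫)) t := by
    intro t
    refine (((hasDerivAt_id t).const_mul (2 * m)).exp.mul (hζ t).norm_sq).congr_deriv ?_
    rw [real_inner_comm, id, mul_one]
    ring
  have hψ_anti : AntitoneOn ψ (Icc 0 T) := by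
    refine antitoneOn_of_hasDerivWithinAt_nonpos (convex_Icc 0 T)
      (fun t _ => (hψ t).continuousAt.continuousWithinAt) (fun t _ => (hψ t).hasDerivWithinAt) ?_
    intro t ht
    rw [interior_Icc] at ht
    have hineq' : 2 * m * ‖ζ t‖ ^ 2 + 2 * ⟪ζ' t, ζ t⟫ ≤ 0 := by linarith [hineq t ht]
    exact mul_nonpos_of_nonneg_of_nonpos (Real.exp_pos _).le hineq'
  have hψT : ψ T ≤ ψ 0 := hψ_anti (left_mem_Icc.2 hT) (right_mem_Icc.2 hT) hT
  have hexp : Real.exp (-(2 * m) * T) * Real.exp (2 * m * T) = 1 := by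
    rw [← Real.exp_add]; ring_nf; exact Real.exp_zero
  calc ‖ζ T‖ ^ 2 = Real.exp (-(2 * m) * T) * ψ T := by simp only [ψ, ← mul_assoc, hexp, one_mul]
    _ ≤ Real.exp (-(2 * m) * T) * ψ 0 := by gcongr
    _ = Real.exp (-(2 * m) * T) * ‖ζ 0‖ ^ 2 := by simp [ψ]

theorem norm_sub_sq_le_exp_mul_of_additive_noise [CompleteSpace E] {b : E → E} {m : ℝ}
    (hb_cont : Continuous b)
    (hb : ∀ x y, ⟪b x - b y, x - y⟫ ≤ -m * ‖x - y‖ ^ 2) {x y w : ℝ → E}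
    (hx_cont : Continuous x) (hy_cont : Continuous y)
    (hx : ∀ t, 0 ≤ t → x t = x 0 + (∫ s in (0:ℝ)..t, b (x s)) + w t)
    (hy : ∀ t, 0 ≤ t → y t = y 0 + (∫ s in (0:ℝ)..t, b (y s)) + w t) {T : ℝ} (hT : 0 ≤ T) :
    ‖x T - y T‖ ^ 2 ≤ Real.exp (-(2 * m) * T) * ‖x 0 - y 0‖ ^ 2 := by
  have hbx : Continuous fun s => b (x s) := hb_cont.comp hx_cont
  have hby : Continuous fun s => b (y s) := hb_cont.comp hy_cont
  have hv : Continuous fun s => b (x s) - b (y s) := hbx.sub hby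
  set ζ : ℝ → E := fun t => (x 0 - y 0) + ∫ s in (0:ℝ)..t, (b (x s) - b (y s))
  have hζ : ∀ t, HasDerivAt ζ (b (x t) - b (y t)) t := fun t =>
    (hv.integral_hasStrictDerivAt 0 t).hasDerivAt.const_add _
  have hζ_eq : ∀ t, 0 ≤ t → ζ t = x t - y t := by
    intro t ht
    rw [hx t ht, hy t ht]
    simp only [ζ, intervalIntegral.integral_sub (hbx.intervalIntegrable 0 t)
      (hby.intervalIntegrable 0 t)]
    abel
  have hζ0 : ζ 0 = x 0 - y 0 := by simp [ζ]
  rw [← hζ_eq T hT, ← hζ0]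
  refine norm_sq_le_exp_mul_of_inner_deriv_le hT hζ fun t ht => ?_
  rw [hζ_eq t ht.1.le]
  exact hb _ _

end Contraction

theorem meanSquare_contraction_general
    {Ω : Type*} [MeasurableSpace Ω] (P : Measure Ω)
    {d : ℕ}
    (b : EuclideanSpace ℝ (Fin d) → EuclideanSpace ℝ (Fin d))
    (hb_cont : Continuous b)
    (m : ℝ)
    (hb : ∀ x y : EuclideanSpace ℝ (Fin d), ⟪b x - b y, x - y⟫ ≤ -m * ‖x - y‖ ^ 2)
    (W X Y : ℝ → Ω → EuclideanSpace ℝ (Fin d))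
    (hX_cont : ∀ ω, Continuous fun t => X t ω)
    (hY_cont : ∀ ω, Continuous fun t => Y t ω)
    (hXY : ∀ᵐ ω ∂P, ∀ t : ℝ, 0 ≤ t →
      (X t ω = X 0 ω + (∫ s in (0:ℝ)..t, b (X s ω)) + Real.sqrt 2 • W t ω) ∧
      (Y t ω = Y 0 ω + (∫ s in (0:ℝ)..t, b (Y s ω)) + Real.sqrt 2 • W t ω))
    (h_int : Integrable (fun ω => ‖X 0 ω - Y 0 ω‖ ^ 2) P) :
    ∀ T : ℝ, 0 ≤ T →
      (∫ ω, ‖X T ω - Y T ω‖ ^ 2 ∂P) ≤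
        Real.exp (-(2 * m) * T) * ∫ ω, ‖X 0 ω - Y 0 ω‖ ^ 2 ∂P := by
  intro T hT
  have hpath : ∀ᵐ ω ∂P, ‖X T ω - Y T ω‖ ^ 2 ≤ Real.exp (-(2 * m) * T) * ‖X 0 ω - Y 0 ω‖ ^ 2 := by
    filter_upwards [hXY] with ω hω
    exact norm_sub_sq_le_exp_mul_of_additive_noise hb_cont hb (hX_cont ω) (hY_cont ω)
      (fun t ht => (hω t ht).1) (fun t ht => (hω t ht).2) hT
  calc (∫ ω, ‖X T ω - Y T ω‖ ^ 2 ∂P)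
      ≤ ∫ ω, Real.exp (-(2 * m) * T) * ‖X 0 ω - Y 0 ω‖ ^ 2 ∂P :=
        integral_mono_of_nonneg (ae_of_all _ fun _ => by positivity) (h_int.const_mul _) hpath
    _ = Real.exp (-(2 * m) * T) * ∫ ω, ‖X 0 ω - Y 0 ω‖ ^ 2 ∂P := integral_const_mul _ _

/-- Exponential contraction in mean square for two solutions of the Langevin-type
SDE (in pathwise integral form) driven by the same noise, under a one-sided
Lipschitz (strong monotonicity) drift condition. -/
theorem meanSquare_contraction
    {Ω : Type*} [MeasurableSpace Ω] (P : Measure Ω) [IsProbabilityMeasure P]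
    {d : ℕ} (hd : 1 ≤ d)
    (b : EuclideanSpace ℝ (Fin d) → EuclideanSpace ℝ (Fin d))
    (hb_cont : Continuous b)
    (m : ℝ) (hm : 0 < m)
    (hb : ∀ x y : EuclideanSpace ℝ (Fin d), ⟪b x - b y, x - y⟫ ≤ -m * ‖x - y‖ ^ 2)
    (W X Y : ℝ → Ω → EuclideanSpace ℝ (Fin d))
    (hW_meas : ∀ t, Measurable (W t))
    (hX_meas : ∀ t, Measurable (X t))
    (hY_meas : ∀ t, Measurable (Y t))
    (hX_cont : ∀ ω, Continuous fun t => X t ω)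
    (hY_cont : ∀ ω, Continuous fun t => Y t ω)
    (hW_cont : ∀ ω, Continuous fun t => W t ω)
    (hXY : ∀ᵐ ω ∂P, ∀ t : ℝ, 0 ≤ t →
      (X t ω = X 0 ω + (∫ s in (0:ℝ)..t, b (X s ω)) + Real.sqrt 2 • W t ω) ∧
      (Y t ω = Y 0 ω + (∫ s in (0:ℝ)..t, b (Y s ω)) + Real.sqrt 2 • W t ω))
    (h_int : Integrable (fun ω => ‖X 0 ω - Y 0 ω‖ ^ 2) P) :
    ∀ T : ℝ, 0 ≤ T →
      (∫ ω, ‖X T ω - Y T ω‖ ^ 2 ∂P) ≤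
        Real.exp (-(2 * m) * T) * ∫ ω, ‖X 0 ω - Y 0 ω‖ ^ 2 ∂P :=
  meanSquare_contraction_general P b hb_cont m hb W X Y hX_cont hY_cont hXY h_int
end

section
/- Let (Ω, 𝓕, P) be a probability space, d ≥ 1, and let b : ℝ^d → ℝ^d be continuous and satisfy ⟨b(x) − b(y), x − y⟩ ≤ −m‖x − y‖² for all x, y, with m > 0. Let W, X, Y : [0,∞) × Ω → ℝ^d be stochastic processes with continuous sample paths such that almost surely, for all t ≥ 0, X_t = X_0 + ∫₀ᵗ b(X_s) ds + √2 W_t and Y_t = Y_0 + ∫₀ᵗ b(Y_s) ds + √2 W_t, and assume E‖X_0 − Y_0‖² < ∞. Let g : ℝ^d → ℝ be Lipschitz with Lipschitz constant Lip(g). Then for every T ≥ 0, E|g(X_T) − g(Y_T)|² ≤ Lip(g)² e^{−2mT} E‖X_0 − Y_0‖². -/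
open MeasureTheory Set
open scoped RealInnerProductSpace

/-!
Both solutions are driven by the same noise, so it cancels in `X - Y`, which therefore solves
the deterministic equation `(X - Y)' = b X - b Y`. Strong monotonicity of `b` gives
`(‖X - Y‖²)' ≤ -2m ‖X - Y‖²`, hence `‖X_T - Y_T‖² ≤ e^{-2mT} ‖X_0 - Y_0‖²` pathwise by Grönwall;
the Lipschitz bound on `g` and integration finish the proof.
-/

section Contraction

variable {E : Type*} [NormedAddCommGroup E] [InnerProductSpace ℝ E]

theorem norm_sq_le_exp_mul_of_inner_deriv_le_s2 {z z' : ℝ → E} {m a b : ℝ} (hab : a ≤ b)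
    (hz : ContinuousOn z (Icc a b))
    (hz' : ∀ t ∈ Ico a b, HasDerivWithinAt z (z' t) (Ici t) t)
    (hdiss : ∀ t ∈ Ico a b, ⟪z' t, z t⟫ ≤ -m * ‖z t‖ ^ 2) :
    ‖z b‖ ^ 2 ≤ Real.exp (-(2 * m) * (b - a)) * ‖z a‖ ^ 2 := by
  have hgronwall := le_gronwallBound_of_liminf_deriv_right_le (f := (‖z ·‖ ^ 2))
    (f' := fun t => 2 * ⟪z t, z' t⟫) (δ := ‖z a‖ ^ 2) (K := -(2 * m)) (ε := 0)
    (hz.norm.pow 2) (fun t ht _ hr => (hz' t ht).norm_sq.liminf_right_slope_le hr) le_rfl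
    (fun t ht => by linarith [real_inner_comm (z t) (z' t), hdiss t ht])
    b (right_mem_Icc.2 hab)
  rwa [gronwallBound_ε0, mul_comm] at hgronwall

theorem hasDerivWithinAt_Ici_of_eq_add_integral [CompleteSpace E] {x f : ℝ → E} (hf : Continuous f)
    (hx : ∀ t, 0 ≤ t → x t = x 0 + ∫ s in (0 : ℝ)..t, f s) {t : ℝ} (ht : 0 ≤ t) :
    HasDerivWithinAt x (f t) (Ici t) t := by
  have hderiv : HasDerivAt (fun u => x 0 + ∫ s in (0 : ℝ)..u, f s) (f t) t :=
    (hf.integral_hasStrictDerivAt 0 t).hasDerivAt.const_add _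
  exact hderiv.hasDerivWithinAt.congr (fun u hu => hx u (ht.trans hu)) (hx t ht)

theorem norm_sub_sq_le_of_same_noise [CompleteSpace E] {b : E → E} (hb_cont : Continuous b)
    {m : ℝ} (hb : ∀ x y : E, ⟪b x - b y, x - y⟫ ≤ -m * ‖x - y‖ ^ 2)
    {x y w : ℝ → E} (hx_cont : Continuous x) (hy_cont : Continuous y)
    (hx : ∀ t, 0 ≤ t → x t = x 0 + (∫ s in (0 : ℝ)..t, b (x s)) + w t)
    (hy : ∀ t, 0 ≤ t → y t = y 0 + (∫ s in (0 : ℝ)..t, b (y s)) + w t)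
    {T : ℝ} (hT : 0 ≤ T) :
    ‖x T - y T‖ ^ 2 ≤ Real.exp (-(2 * m) * T) * ‖x 0 - y 0‖ ^ 2 := by
  have hbx : Continuous fun s => b (x s) := hb_cont.comp hx_cont
  have hby : Continuous fun s => b (y s) := hb_cont.comp hy_cont
  have hdiff : ∀ t, 0 ≤ t →
      (x - y) t = (x - y) 0 + ∫ s in (0 : ℝ)..t, (b (x s) - b (y s)) := by
    intro t ht
    rw [intervalIntegral.integral_sub (hbx.intervalIntegrable 0 t) (hby.intervalIntegrable 0 t)]
    simp only [Pi.sub_apply]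
    rw [hx t ht, hy t ht]
    abel
  simpa using norm_sq_le_exp_mul_of_inner_deriv_le_s2 hT (hx_cont.sub hy_cont).continuousOn
    (fun t ht => hasDerivWithinAt_Ici_of_eq_add_integral (hbx.sub hby) hdiff ht.1)
    (fun t _ => hb (x t) (y t))

end Contraction

theorem lipschitz_observable_contraction_general
    {Ω : Type*} [MeasurableSpace Ω] (P : Measure Ω)
    {d : ℕ}
    (b : EuclideanSpace ℝ (Fin d) → EuclideanSpace ℝ (Fin d))
    (hb_cont : Continuous b)
    (m : ℝ)
    (hb : ∀ x y : EuclideanSpace ℝ (Fin d), ⟪b x - b y, x - y⟫ ≤ -m * ‖x - y‖ ^ 2)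
    (W X Y : ℝ → Ω → EuclideanSpace ℝ (Fin d))
    (hX_cont : ∀ ω, Continuous fun t => X t ω)
    (hY_cont : ∀ ω, Continuous fun t => Y t ω)
    (hXY : ∀ᵐ ω ∂P, ∀ t : ℝ, 0 ≤ t →
      (X t ω = X 0 ω + (∫ s in (0:ℝ)..t, b (X s ω)) + Real.sqrt 2 • W t ω) ∧
      (Y t ω = Y 0 ω + (∫ s in (0:ℝ)..t, b (Y s ω)) + Real.sqrt 2 • W t ω))
    (h_int : Integrable (fun ω => ‖X 0 ω - Y 0 ω‖ ^ 2) P)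
    (g : EuclideanSpace ℝ (Fin d) → ℝ) (Lg : NNReal) (hg : LipschitzWith Lg g) :
    ∀ T : ℝ, 0 ≤ T →
      (∫ ω, |g (X T ω) - g (Y T ω)| ^ 2 ∂P) ≤
        (Lg : ℝ) ^ 2 * Real.exp (-(2 * m) * T) * ∫ ω, ‖X 0 ω - Y 0 ω‖ ^ 2 ∂P := by
  intro T hT
  have hpathwise : ∀ᵐ ω ∂P, |g (X T ω) - g (Y T ω)| ^ 2 ≤
      (Lg : ℝ) ^ 2 * Real.exp (-(2 * m) * T) * ‖X 0 ω - Y 0 ω‖ ^ 2 := by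
    filter_upwards [hXY] with ω hω
    have hcontract := norm_sub_sq_le_of_same_noise hb_cont hb (hX_cont ω) (hY_cont ω)
      (fun t ht => (hω t ht).1) (fun t ht => (hω t ht).2) hT
    have hlip : |g (X T ω) - g (Y T ω)| ≤ Lg * ‖X T ω - Y T ω‖ := by
      simpa [Real.dist_eq, dist_eq_norm] using hg.dist_le_mul (X T ω) (Y T ω)
    calc |g (X T ω) - g (Y T ω)| ^ 2 ≤ (Lg * ‖X T ω - Y T ω‖) ^ 2 := by gcongr
      _ = Lg ^ 2 * ‖X T ω - Y T ω‖ ^ 2 := mul_pow _ _ _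
      _ ≤ _ := by rw [mul_assoc]; gcongr
  calc (∫ ω, |g (X T ω) - g (Y T ω)| ^ 2 ∂P)
      ≤ ∫ ω, (Lg : ℝ) ^ 2 * Real.exp (-(2 * m) * T) * ‖X 0 ω - Y 0 ω‖ ^ 2 ∂P :=
        integral_mono_of_nonneg (ae_of_all _ fun _ => by positivity) (h_int.const_mul _) hpathwise
    _ = _ := integral_const_mul _ _

/-- Variance-type bound for a Lipschitz observable evaluated at two coupled
solutions of the Langevin-type SDE driven by the same Brownian path, under a
one-sided Lipschitz (strong monotonicity) drift condition. -/
theorem lipschitz_observable_contraction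
    {Ω : Type*} [MeasurableSpace Ω] (P : Measure Ω) [IsProbabilityMeasure P]
    {d : ℕ} (hd : 1 ≤ d)
    (b : EuclideanSpace ℝ (Fin d) → EuclideanSpace ℝ (Fin d))
    (hb_cont : Continuous b)
    (m : ℝ) (hm : 0 < m)
    (hb : ∀ x y : EuclideanSpace ℝ (Fin d), ⟪b x - b y, x - y⟫ ≤ -m * ‖x - y‖ ^ 2)
    (W X Y : ℝ → Ω → EuclideanSpace ℝ (Fin d))
    (hW_meas : ∀ t, Measurable (W t))
    (hX_meas : ∀ t, Measurable (X t))
    (hY_meas : ∀ t, Measurable (Y t))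
    (hX_cont : ∀ ω, Continuous fun t => X t ω)
    (hY_cont : ∀ ω, Continuous fun t => Y t ω)
    (hW_cont : ∀ ω, Continuous fun t => W t ω)
    (hXY : ∀ᵐ ω ∂P, ∀ t : ℝ, 0 ≤ t →
      (X t ω = X 0 ω + (∫ s in (0:ℝ)..t, b (X s ω)) + Real.sqrt 2 • W t ω) ∧
      (Y t ω = Y 0 ω + (∫ s in (0:ℝ)..t, b (Y s ω)) + Real.sqrt 2 • W t ω))
    (h_int : Integrable (fun ω => ‖X 0 ω - Y 0 ω‖ ^ 2) P)
    (g : EuclideanSpace ℝ (Fin d) → ℝ) (Lg : NNReal) (hg : LipschitzWith Lg g) :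
    ∀ T : ℝ, 0 ≤ T →
      (∫ ω, |g (X T ω) - g (Y T ω)| ^ 2 ∂P) ≤
        (Lg : ℝ) ^ 2 * Real.exp (-(2 * m) * T) * ∫ ω, ‖X 0 ω - Y 0 ω‖ ^ 2 ∂P :=
  lipschitz_observable_contraction_general P b hb_cont m hb W X Y hX_cont hY_cont hXY h_int g Lg hg
end

section
/- Let d ≥ 1, let b : ℝ^d → ℝ^d be L-Lipschitz (L > 0), let h > 0 and x ∈ ℝ^d. On a probability space let ξ₁, ξ₂ be ℝ^d-valued random vectors with E[ξ₁] = 0 and E‖ξ₁‖² = d. Define the coupled fine/coarse Euler steps x_{1/2} = x + (h/2) b(x) + √h ξ₁, x^f = x_{1/2} + (h/2) b(x_{1/2}) + √h ξ₂, and x^c = x + h b(x) + √h (ξ₁ + ξ₂). Then E‖x^f − x^c‖² ≤ h³ (L²/4) ( (h/2)(L²‖x‖² + ‖b(0)‖²) + d ). -/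
/-!
The fine and coarse steps see the same noise, so they differ only through the drift:
`x^f - x^c = (h/2) (b(x_{1/2}) - b(x))`. The Lipschitz bound turns this into
`(h/2)² L² ‖x_{1/2} - x‖²`, and `x_{1/2} - x = (h/2) b(x) + √h ξ₁` has second moment
`(h/2)² ‖b(x)‖² + h d` because `ξ₁` is centred. Finally `‖b(x)‖² ≤ 2 (L² ‖x‖² + ‖b(0)‖²)`.
-/

open MeasureTheory

section Algebra

variable {E : Type*} [AddCommGroup E] [Module ℝ E]

theorem two_half_steps_sub_full_step (b : E → E) (h s : ℝ) (x y ξ₁ ξ₂ : E)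
    (hy : y = x + (h / 2) • b x + s • ξ₁) :
    (y + (h / 2) • b y + s • ξ₂) - (x + h • b x + s • (ξ₁ + ξ₂)) = (h / 2) • (b y - b x) := by
  subst hy
  module

end Algebra

theorem norm_sq_le_of_lipschitz {E F : Type*} [SeminormedAddCommGroup E]
    [SeminormedAddCommGroup F] {b : E → F} {L : ℝ}
    (hlip : ∀ x y, ‖b x - b y‖ ≤ L * ‖x - y‖) (x : E) :
    ‖b x‖ ^ 2 ≤ 2 * (L ^ 2 * ‖x‖ ^ 2 + ‖b 0‖ ^ 2) := by
  have hgrowth : ‖b x‖ ≤ L * ‖x‖ + ‖b 0‖ := by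
    have := hlip x 0
    rw [sub_zero] at this
    linarith [norm_sub_norm_le (b x) (b 0)]
  calc ‖b x‖ ^ 2 ≤ (L * ‖x‖ + ‖b 0‖) ^ 2 := pow_le_pow_left₀ (norm_nonneg _) hgrowth 2
    _ ≤ 2 * ((L * ‖x‖) ^ 2 + ‖b 0‖ ^ 2) := add_sq_le
    _ = 2 * (L ^ 2 * ‖x‖ ^ 2 + ‖b 0‖ ^ 2) := by ring

section SecondMoment

variable {Ω E : Type*} [MeasurableSpace Ω] {P : Measure Ω}
  [NormedAddCommGroup E] [InnerProductSpace ℝ E] {ξ : Ω → E}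

theorem norm_add_smul_sq (v w : E) (c : ℝ) :
    ‖v + c • w‖ ^ 2 = ‖v‖ ^ 2 + 2 * c * inner ℝ v w + c ^ 2 * ‖w‖ ^ 2 := by
  rw [norm_add_sq_real, real_inner_smul_right, norm_smul, Real.norm_eq_abs, mul_pow, sq_abs]
  ring

theorem integrable_norm_const_add_smul_sq [IsFiniteMeasure P] (hξ : Integrable ξ P)
    (hξ_sq : Integrable (fun ω => ‖ξ ω‖ ^ 2) P) (v : E) (c : ℝ) :
    Integrable (fun ω => ‖v + c • ξ ω‖ ^ 2) P := by
  simp only [norm_add_smul_sq]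
  exact ((integrable_const _).add ((hξ.const_inner v).const_mul _)).add (hξ_sq.const_mul _)

theorem integral_norm_const_add_smul_sq [CompleteSpace E] [IsProbabilityMeasure P]
    (hξ : Integrable ξ P) (hξ_sq : Integrable (fun ω => ‖ξ ω‖ ^ 2) P)
    (hξ_mean : ∫ ω, ξ ω ∂P = 0) (v : E) (c : ℝ) :
    ∫ ω, ‖v + c • ξ ω‖ ^ 2 ∂P = ‖v‖ ^ 2 + c ^ 2 * ∫ ω, ‖ξ ω‖ ^ 2 ∂P := by
  have hinner : Integrable (fun ω => 2 * c * inner ℝ v (ξ ω)) P := (hξ.const_inner v).const_mul _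
  have hconst_add_inner : Integrable (fun ω => ‖v‖ ^ 2 + 2 * c * inner ℝ v (ξ ω)) P :=
    (integrable_const _).add hinner
  simp only [norm_add_smul_sq]
  rw [integral_add hconst_add_inner (hξ_sq.const_mul _),
    integral_add (integrable_const _) hinner, integral_const, integral_const_mul,
    integral_const_mul, integral_inner hξ, hξ_mean, inner_zero_right]
  simp

end SecondMoment

theorem euler_coupling_one_step_strong_error_general
    {Ω : Type*} [MeasurableSpace Ω] (P : Measure Ω) [IsProbabilityMeasure P]
    {d : ℕ}
    (b : EuclideanSpace ℝ (Fin d) → EuclideanSpace ℝ (Fin d))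
    (L : ℝ)
    (hlip : ∀ x y : EuclideanSpace ℝ (Fin d), ‖b x - b y‖ ≤ L * ‖x - y‖)
    (h : ℝ) (hh : 0 < h) (x : EuclideanSpace ℝ (Fin d))
    (ξ₁ ξ₂ : Ω → EuclideanSpace ℝ (Fin d))
    (hξ₁_int : Integrable ξ₁ P)
    (hξ₁_sq_int : Integrable (fun ω => ‖ξ₁ ω‖ ^ 2) P)
    (hξ₁_mean : (∫ ω, ξ₁ ω ∂P) = 0)
    (hξ₁_var : (∫ ω, ‖ξ₁ ω‖ ^ 2 ∂P) = d)
    (xhalf xf xc : Ω → EuclideanSpace ℝ (Fin d))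
    (hxhalf : ∀ ω, xhalf ω = x + (h / 2) • b x + Real.sqrt h • ξ₁ ω)
    (hxf : ∀ ω, xf ω = xhalf ω + (h / 2) • b (xhalf ω) + Real.sqrt h • ξ₂ ω)
    (hxc : ∀ ω, xc ω = x + h • b x + Real.sqrt h • (ξ₁ ω + ξ₂ ω)) :
    (∫ ω, ‖xf ω - xc ω‖ ^ 2 ∂P) ≤
      h ^ 3 * (L ^ 2 / 4) *
        ((h / 2) * (L ^ 2 * ‖x‖ ^ 2 + ‖b 0‖ ^ 2) + d) := by
  set v := (h / 2) • b x
  have hpointwise : ∀ ω, ‖xf ω - xc ω‖ ^ 2 ≤ (h / 2) ^ 2 * L ^ 2 * ‖v + √h • ξ₁ ω‖ ^ 2 := by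
    intro ω
    have hstep : xhalf ω - x = v + √h • ξ₁ ω := by rw [hxhalf ω]; abel
    have hlip_sq := pow_le_pow_left₀ (norm_nonneg _) (hlip (xhalf ω) x) 2
    rw [hxf ω, hxc ω, two_half_steps_sub_full_step b h (√h) x _ _ _ (hxhalf ω), norm_smul,
      Real.norm_of_nonneg (by positivity), mul_pow, ← hstep, mul_assoc, ← mul_pow L]
    exact mul_le_mul_of_nonneg_left hlip_sq (by positivity)
  have hmoment : ∫ ω, ‖v + √h • ξ₁ ω‖ ^ 2 ∂P = (h / 2) ^ 2 * ‖b x‖ ^ 2 + h * d := by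
    rw [integral_norm_const_add_smul_sq hξ₁_int hξ₁_sq_int hξ₁_mean, hξ₁_var,
      Real.sq_sqrt hh.le, norm_smul, Real.norm_of_nonneg (by positivity), mul_pow]
  calc ∫ ω, ‖xf ω - xc ω‖ ^ 2 ∂P
      ≤ ∫ ω, (h / 2) ^ 2 * L ^ 2 * ‖v + √h • ξ₁ ω‖ ^ 2 ∂P :=
        integral_mono_of_nonneg (.of_forall fun _ => by positivity)
          ((integrable_norm_const_add_smul_sq hξ₁_int hξ₁_sq_int v _).const_mul _)
          (.of_forall hpointwise)
    _ = (h / 2) ^ 2 * L ^ 2 * ((h / 2) ^ 2 * ‖b x‖ ^ 2 + h * d) := by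
        rw [integral_const_mul, hmoment]
    _ ≤ h ^ 3 * (L ^ 2 / 4) * ((h / 2) * (L ^ 2 * ‖x‖ ^ 2 + ‖b 0‖ ^ 2) + d) := by
        have hcoef : 0 ≤ (h / 2) ^ 4 * L ^ 2 := by positivity
        nlinarith [mul_le_mul_of_nonneg_left (norm_sq_le_of_lipschitz hlip x) hcoef]

/-- One-step strong (L²) error estimate for the coupled fine/coarse
Euler–Maruyama steps: two half-steps versus one full step driven by the
same noise. -/
theorem euler_coupling_one_step_strong_error
    {Ω : Type*} [MeasurableSpace Ω] (P : Measure Ω) [IsProbabilityMeasure P]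
    {d : ℕ} (hd : 1 ≤ d)
    (b : EuclideanSpace ℝ (Fin d) → EuclideanSpace ℝ (Fin d))
    (L : ℝ) (hL : 0 < L)
    (hlip : ∀ x y : EuclideanSpace ℝ (Fin d), ‖b x - b y‖ ≤ L * ‖x - y‖)
    (h : ℝ) (hh : 0 < h) (x : EuclideanSpace ℝ (Fin d))
    (ξ₁ ξ₂ : Ω → EuclideanSpace ℝ (Fin d))
    (hξ₁_meas : Measurable ξ₁) (hξ₂_meas : Measurable ξ₂)
    (hξ₁_int : Integrable ξ₁ P)
    (hξ₁_sq_int : Integrable (fun ω => ‖ξ₁ ω‖ ^ 2) P)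
    (hξ₁_mean : (∫ ω, ξ₁ ω ∂P) = 0)
    (hξ₁_var : (∫ ω, ‖ξ₁ ω‖ ^ 2 ∂P) = d)
    (xhalf xf xc : Ω → EuclideanSpace ℝ (Fin d))
    (hxhalf : ∀ ω, xhalf ω = x + (h / 2) • b x + Real.sqrt h • ξ₁ ω)
    (hxf : ∀ ω, xf ω = xhalf ω + (h / 2) • b (xhalf ω) + Real.sqrt h • ξ₂ ω)
    (hxc : ∀ ω, xc ω = x + h • b x + Real.sqrt h • (ξ₁ ω + ξ₂ ω)) :
    (∫ ω, ‖xf ω - xc ω‖ ^ 2 ∂P) ≤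
      h ^ 3 * (L ^ 2 / 4) *
        ((h / 2) * (L ^ 2 * ‖x‖ ^ 2 + ‖b 0‖ ^ 2) + d) :=
  euler_coupling_one_step_strong_error_general P b L hlip h hh x ξ₁ ξ₂ hξ₁_int hξ₁_sq_int hξ₁_mean
    hξ₁_var xhalf xf xc hxhalf hxf hxc
end

section
/- Let d ≥ 1 and let U : ℝ^d → ℝ be three times continuously differentiable with ∇U L-Lipschitz (L > 0) and with ‖D²U(z)‖ ≤ C and ‖D³U(z)‖ ≤ C for all z ∈ ℝ^d, for some C > 0. Then there exists a constant C' > 0, depending only on C and L, such that for every h ∈ (0,1], every x ∈ ℝ^d, and all ℝ^d-valued random vectors ξ₁, ξ₂ with E[ξ₁] = 0 and E‖ξ₁‖² = d, the coupled fine/coarse Euler steps x_{1/2} = x + (h/2)∇U(x) + √h ξ₁, x^f = x_{1/2} + (h/2)∇U(x_{1/2}) + √h ξ₂ and x^c = x + h∇U(x) + √h(ξ₁ + ξ₂) satisfy ‖E[x^f − x^c]‖ ≤ C' h² ( 1 + ‖x‖ + h‖x‖² + ‖∇U(0)‖ + h‖∇U(0)‖² + d ). -/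
/-!
The noise `ξ₂` enters `x^f` and `x^c` identically, so `x^f - x^c = (h/2) (∇U(x_{1/2}) - ∇U(x))`.
Expanding `∇U` to second order around `x`, the linear term has mean
`D²U(x) E[x_{1/2} - x] = (h/2) D²U(x) ∇U(x)`, of size `C h ‖∇U(x)‖`, and the remainder is at most
`C ‖x_{1/2} - x‖²`, whose mean is `(h/2)² ‖∇U(x)‖² + h d` because `ξ₁` is centred. This is where
`h^{3/2}` improves to `h²`: the `√h`-term of the increment only enters through its mean, which
vanishes. Multiplying by `h/2` and using `‖∇U(x)‖ ≤ ‖∇U(0)‖ + L ‖x‖` gives the bound.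
-/

open MeasureTheory InnerProductSpace Metric
open scoped Gradient

section Taylor
variable {E F : Type*} [NormedAddCommGroup E] [NormedSpace ℝ E]
  [NormedAddCommGroup F] [NormedSpace ℝ F] {f : E → F} {C : ℝ}

theorem norm_fderiv_sub_fderiv_le_of_norm_iteratedFDeriv_two_le (hf : ContDiff ℝ 2 f)
    (hC : ∀ z, ‖iteratedFDeriv ℝ 2 f z‖ ≤ C) (x y : E) :
    ‖fderiv ℝ f y - fderiv ℝ f x‖ ≤ C * ‖y - x‖ :=
  convex_univ.norm_image_sub_le_of_norm_fderiv_le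
    (fun z _ => ((hf.fderiv_right (m := 1) le_rfl).differentiable one_ne_zero) z)
    (fun z _ => by rw [← norm_iteratedFDeriv_one, norm_iteratedFDeriv_fderiv]; exact hC z)
    (Set.mem_univ x) (Set.mem_univ y)

theorem norm_sub_sub_fderiv_le_of_norm_iteratedFDeriv_two_le (hf : ContDiff ℝ 2 f)
    (hC : ∀ z, ‖iteratedFDeriv ℝ 2 f z‖ ≤ C) (x y : E) :
    ‖f y - f x - fderiv ℝ f x (y - x)‖ ≤ C * ‖y - x‖ ^ 2 := by
  have hC0 : 0 ≤ C := (norm_nonneg _).trans (hC x)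
  calc ‖f y - f x - fderiv ℝ f x (y - x)‖ ≤ C * ‖y - x‖ * ‖y - x‖ :=
        (convex_closedBall x ‖y - x‖).norm_image_sub_le_of_norm_fderiv_le'
          (fun z _ => (hf.differentiable two_ne_zero) z)
          (fun z hz => (norm_fderiv_sub_fderiv_le_of_norm_iteratedFDeriv_two_le hf hC x z).trans
            (by gcongr; exact mem_closedBall_iff_norm.1 hz))
          (mem_closedBall_self (norm_nonneg _)) (mem_closedBall_iff_norm.2 le_rfl)
    _ = C * ‖y - x‖ ^ 2 := by ring

end Taylor

section Gradient
variable {E : Type*} [NormedAddCommGroup E] [InnerProductSpace ℝ E] [CompleteSpace E]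

theorem gradient_eq_comp_fderiv (U : E → ℝ) : ∇ U = (toDual ℝ E).symm ∘ fderiv ℝ U :=
  rfl

theorem norm_iteratedFDeriv_gradient (U : E → ℝ) (n : ℕ) (x : E) :
    ‖iteratedFDeriv ℝ n (∇ U) x‖ = ‖iteratedFDeriv ℝ (n + 1) U x‖ := by
  rw [gradient_eq_comp_fderiv, LinearIsometryEquiv.norm_iteratedFDeriv_comp_left,
    norm_iteratedFDeriv_fderiv]

theorem ContDiff.gradient {n : WithTop ℕ∞} {U : E → ℝ} (hU : ContDiff ℝ (n + 1) U) :
    ContDiff ℝ n (∇ U) := by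
  rw [gradient_eq_comp_fderiv]
  exact (toDual ℝ E).symm.toContinuousLinearEquiv.contDiff.comp (hU.fderiv_right le_rfl)

end Gradient

section Moments
variable {Ω E F : Type*} [MeasurableSpace Ω] {P : Measure Ω}
  [NormedAddCommGroup E] [NormedSpace ℝ E] [CompleteSpace E]
  [NormedAddCommGroup F] [NormedSpace ℝ F] [CompleteSpace F]

theorem norm_integral_sub_sub_le_of_taylor {g : E → F} (hg : Continuous g)
    {A : E →L[ℝ] F} {x : E} {K : ℝ}
    (htaylor : ∀ y, ‖g y - g x - A (y - x)‖ ≤ K * ‖y - x‖ ^ 2) {Y : Ω → E}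
    (hY : Integrable (fun ω => Y ω - x) P) (hYsq : Integrable (fun ω => ‖Y ω - x‖ ^ 2) P) :
    ‖∫ ω, (g (Y ω) - g x) ∂P - A (∫ ω, (Y ω - x) ∂P)‖ ≤
      K * ∫ ω, ‖Y ω - x‖ ^ 2 ∂P := by
  set R : Ω → F := fun ω => g (Y ω) - g x - A (Y ω - x)
  have hR_bound : ∀ ω, ‖R ω‖ ≤ K * ‖Y ω - x‖ ^ 2 := fun ω => htaylor (Y ω)
  have hR : Integrable R P := by
    have hYm : AEStronglyMeasurable Y P := by
      simpa using hY.aestronglyMeasurable.add_const x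
    exact (hYsq.const_mul K).mono' (by fun_prop) (ae_of_all _ hR_bound)
  have hsplit :
      ∫ ω, (g (Y ω) - g x) ∂P = ∫ ω, R ω ∂P + A (∫ ω, (Y ω - x) ∂P) := by
    rw [← A.integral_comp_comm hY, ← integral_add hR (A.integrable_comp hY)]
    simp [R]
  calc ‖∫ ω, (g (Y ω) - g x) ∂P - A (∫ ω, (Y ω - x) ∂P)‖
      = ‖∫ ω, R ω ∂P‖ := by rw [hsplit, add_sub_cancel_right]
    _ ≤ ∫ ω, K * ‖Y ω - x‖ ^ 2 ∂P :=
        norm_integral_le_of_norm_le (hYsq.const_mul K) (ae_of_all _ hR_bound)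
    _ = K * ∫ ω, ‖Y ω - x‖ ^ 2 ∂P := integral_const_mul K _

end Moments

section Variance
variable {Ω E : Type*} [MeasurableSpace Ω] {P : Measure Ω}
  [NormedAddCommGroup E] [InnerProductSpace ℝ E] {ξ : Ω → E}

theorem norm_add_smul_sq_eq (a v : E) (c : ℝ) :
    ‖a + c • v‖ ^ 2 = ‖a‖ ^ 2 + 2 * c * inner ℝ a v + c ^ 2 * ‖v‖ ^ 2 := by
  rw [norm_add_sq_real, inner_smul_right, norm_smul, mul_pow, Real.norm_eq_abs, sq_abs]
  ring

theorem integrable_norm_add_smul_sq [IsFiniteMeasure P] (hξ : Integrable ξ P)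
    (hξsq : Integrable (fun ω => ‖ξ ω‖ ^ 2) P) (a : E) (c : ℝ) :
    Integrable (fun ω => ‖a + c • ξ ω‖ ^ 2) P := by
  simp_rw [norm_add_smul_sq_eq]
  exact ((integrable_const _).add ((hξ.const_inner a).const_mul _)).add (hξsq.const_mul _)

theorem integral_const_add_smul [IsProbabilityMeasure P] [CompleteSpace E]
    (hξ : Integrable ξ P) (hmean : ∫ ω, ξ ω ∂P = 0) (a : E) (c : ℝ) :
    ∫ ω, (a + c • ξ ω) ∂P = a := by
  have hnoise : Integrable (fun ω => c • ξ ω) P := hξ.smul c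
  rw [integral_add (integrable_const _) hnoise, integral_smul c, hmean]
  simp

theorem integral_norm_add_smul_sq [IsProbabilityMeasure P] [CompleteSpace E]
    (hξ : Integrable ξ P) (hξsq : Integrable (fun ω => ‖ξ ω‖ ^ 2) P)
    (hmean : ∫ ω, ξ ω ∂P = 0) (a : E) (c : ℝ) :
    ∫ ω, ‖a + c • ξ ω‖ ^ 2 ∂P = ‖a‖ ^ 2 + c ^ 2 * ∫ ω, ‖ξ ω‖ ^ 2 ∂P := by
  have hinner : Integrable (fun ω => 2 * c * inner ℝ a (ξ ω)) P :=
    (hξ.const_inner a).const_mul _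
  have hlin : Integrable (fun ω => ‖a‖ ^ 2 + 2 * c * inner ℝ a (ξ ω)) P :=
    (integrable_const _).add hinner
  simp_rw [norm_add_smul_sq_eq]
  rw [integral_add hlin (hξsq.const_mul _), integral_add (integrable_const _) hinner,
    integral_const_mul, integral_const_mul, integral_inner hξ, hmean]
  simp

end Variance

section GradientIntegral
variable {Ω E : Type*} [MeasurableSpace Ω] {P : Measure Ω}
  [NormedAddCommGroup E] [InnerProductSpace ℝ E] [CompleteSpace E]

theorem norm_integral_gradient_sub_le {U : E → ℝ} (hU : ContDiff ℝ 3 U) {C : ℝ} {x : E}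
    (hD2 : ‖iteratedFDeriv ℝ 2 U x‖ ≤ C) (hD3 : ∀ z, ‖iteratedFDeriv ℝ 3 U z‖ ≤ C)
    {Y : Ω → E} (hY : Integrable (fun ω => Y ω - x) P)
    (hYsq : Integrable (fun ω => ‖Y ω - x‖ ^ 2) P) :
    ‖∫ ω, (∇ U (Y ω) - ∇ U x) ∂P‖ ≤
      C * ‖∫ ω, (Y ω - x) ∂P‖ + C * ∫ ω, ‖Y ω - x‖ ^ 2 ∂P := by
  have hg : ContDiff ℝ 2 (∇ U) := ContDiff.gradient (n := 2) hU
  set A := fderiv ℝ (∇ U) x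
  have hA : ‖A‖ ≤ C := by
    rw [← norm_iteratedFDeriv_one, norm_iteratedFDeriv_gradient]; exact hD2
  have htaylor := norm_integral_sub_sub_le_of_taylor hg.continuous
    (norm_sub_sub_fderiv_le_of_norm_iteratedFDeriv_two_le hg
      (fun z => (norm_iteratedFDeriv_gradient U 2 z).trans_le (hD3 z)) x) hY hYsq
  calc ‖∫ ω, (∇ U (Y ω) - ∇ U x) ∂P‖
      ≤ ‖A (∫ ω, (Y ω - x) ∂P)‖ +
          ‖∫ ω, (∇ U (Y ω) - ∇ U x) ∂P - A (∫ ω, (Y ω - x) ∂P)‖ :=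
        norm_le_insert' _ _
    _ ≤ C * ‖∫ ω, (Y ω - x) ∂P‖ + C * ∫ ω, ‖Y ω - x‖ ^ 2 ∂P :=
        add_le_add ((A.le_opNorm _).trans (mul_le_mul_of_nonneg_right hA (norm_nonneg _)))
          htaylor

end GradientIntegral

theorem euler_coupling_error_bound_le {C L h G a b δ : ℝ} (hC : 0 ≤ C) (hL : 0 ≤ L)
    (hh : 0 ≤ h) (ha : 0 ≤ a) (hb : 0 ≤ b) (hδ : 0 ≤ δ) (hG0 : 0 ≤ G)
    (hG : G ≤ b + L * a) :
    h / 2 * (C * (h / 2 * G) + C * ((h / 2 * G) ^ 2 + h * δ)) ≤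
      C * (1 + L) ^ 2 * h ^ 2 * (1 + a + h * a ^ 2 + b + h * b ^ 2 + δ) := by
  have hG' : G ≤ (1 + L) * (a + b) := by nlinarith
  have hG2 : G ^ 2 ≤ 2 * (1 + L) ^ 2 * (a ^ 2 + b ^ 2) := by
    nlinarith [pow_le_pow_left₀ hG0 hG' 2, sq_nonneg (a - b)]
  have h1L : 1 ≤ (1 + L) ^ 2 := by nlinarith
  have hCh : 0 ≤ C * h ^ 2 := by positivity
  calc h / 2 * (C * (h / 2 * G) + C * ((h / 2 * G) ^ 2 + h * δ))
      = C * h ^ 2 * (G / 4 + h * G ^ 2 / 8 + δ / 2) := by ring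
    _ ≤ C * h ^ 2 * ((1 + L) ^ 2 * (a + b + h * (a ^ 2 + b ^ 2) + δ)) := by
        gcongr ?_ * ?_
        nlinarith [mul_le_mul_of_nonneg_left hG2 hh, mul_le_mul_of_nonneg_right h1L hδ]
    _ ≤ C * (1 + L) ^ 2 * h ^ 2 * (1 + a + h * a ^ 2 + b + h * b ^ 2 + δ) := by
        nlinarith [mul_nonneg hCh (sq_nonneg (1 + L))]

theorem euler_coupling_one_step_weak_error_improved_general
    {d : ℕ}
    (U : EuclideanSpace ℝ (Fin d) → ℝ)
    (hU : ContDiff ℝ 3 U)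
    (L : ℝ) (hL : 0 < L)
    (hlip : ∀ x y : EuclideanSpace ℝ (Fin d), ‖∇ U x - ∇ U y‖ ≤ L * ‖x - y‖)
    (C : ℝ) (hC : 0 < C)
    (hD2 : ∀ z : EuclideanSpace ℝ (Fin d), ‖iteratedFDeriv ℝ 2 U z‖ ≤ C)
    (hD3 : ∀ z : EuclideanSpace ℝ (Fin d), ‖iteratedFDeriv ℝ 3 U z‖ ≤ C) :
    ∃ C' : ℝ, 0 < C' ∧
      ∀ (h : ℝ), 0 < h → h ≤ 1 → ∀ (x : EuclideanSpace ℝ (Fin d)),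
      ∀ (Ω : Type) (mΩ : MeasurableSpace Ω) (P : Measure Ω)
        (_ : IsProbabilityMeasure P)
        (ξ₁ ξ₂ : Ω → EuclideanSpace ℝ (Fin d)),
        Measurable ξ₁ → Measurable ξ₂ →
        Integrable ξ₁ P → Integrable (fun ω => ‖ξ₁ ω‖ ^ 2) P →
        (∫ ω, ξ₁ ω ∂P) = 0 → (∫ ω, ‖ξ₁ ω‖ ^ 2 ∂P) = d →
        ∀ (xhalf xf xc : Ω → EuclideanSpace ℝ (Fin d)),
        (∀ ω, xhalf ω = x + (h / 2) • ∇ U x + Real.sqrt h • ξ₁ ω) →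
        (∀ ω, xf ω = xhalf ω + (h / 2) • ∇ U (xhalf ω) + Real.sqrt h • ξ₂ ω) →
        (∀ ω, xc ω = x + h • ∇ U x + Real.sqrt h • (ξ₁ ω + ξ₂ ω)) →
        ‖∫ ω, (xf ω - xc ω) ∂P‖ ≤
          C' * h ^ 2 *
            (1 + ‖x‖ + h * ‖x‖ ^ 2 + ‖∇ U 0‖ + h * ‖∇ U 0‖ ^ 2 + d) := by
  refine ⟨C * (1 + L) ^ 2, by positivity, ?_⟩
  intro h hh _ x Ω _ P _ ξ₁ ξ₂ _ _ hξ hξsq hmean hvar xhalf xf xc hxhalf hxf hxc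
  have hstep : ∀ ω, xhalf ω - x = (h / 2) • ∇ U x + Real.sqrt h • ξ₁ ω := by
    intro ω; rw [hxhalf]; abel
  have hcoupling :
      ∫ ω, (xf ω - xc ω) ∂P = (h / 2) • ∫ ω, (∇ U (xhalf ω) - ∇ U x) ∂P := by
    rw [← integral_smul]
    congr 1
    funext ω
    rw [hxf, hxc, hxhalf]
    module
  have hdrift := norm_integral_gradient_sub_le hU (hD2 x) hD3 (Y := xhalf)
    (by simp_rw [hstep]; exact (integrable_const _).add (hξ.smul (Real.sqrt h)))
    (by simp_rw [hstep]; exact integrable_norm_add_smul_sq hξ hξsq _ _)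
  simp_rw [hstep] at hdrift
  rw [integral_const_add_smul hξ hmean, integral_norm_add_smul_sq hξ hξsq hmean, hvar,
    Real.sq_sqrt hh.le, norm_smul, Real.norm_of_nonneg (by positivity)] at hdrift
  have hgrad_x : ‖∇ U x‖ ≤ ‖∇ U 0‖ + L * ‖x‖ := by
    linarith [norm_le_insert' (∇ U x) (∇ U 0), sub_zero x ▸ hlip x 0]
  calc ‖∫ ω, (xf ω - xc ω) ∂P‖
      = h / 2 * ‖∫ ω, (∇ U (xhalf ω) - ∇ U x) ∂P‖ := by
        rw [hcoupling, norm_smul, Real.norm_of_nonneg (by positivity)]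
    _ ≤ h / 2 * (C * (h / 2 * ‖∇ U x‖) + C * ((h / 2 * ‖∇ U x‖) ^ 2 + h * d)) := by
        gcongr
    _ ≤ _ := euler_coupling_error_bound_le hC.le hL.le hh.le (norm_nonneg _) (norm_nonneg _)
        (Nat.cast_nonneg d) (norm_nonneg _) hgrad_x

/-- Improved (second-order) one-step weak error estimate for the coupled
fine/coarse Euler–Maruyama steps, under bounded second and third derivatives
of the potential `U`. -/
theorem euler_coupling_one_step_weak_error_improved
    {d : ℕ} (hd : 1 ≤ d)
    (U : EuclideanSpace ℝ (Fin d) → ℝ)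
    (hU : ContDiff ℝ 3 U)
    (L : ℝ) (hL : 0 < L)
    (hlip : ∀ x y : EuclideanSpace ℝ (Fin d), ‖∇ U x - ∇ U y‖ ≤ L * ‖x - y‖)
    (C : ℝ) (hC : 0 < C)
    (hD2 : ∀ z : EuclideanSpace ℝ (Fin d), ‖iteratedFDeriv ℝ 2 U z‖ ≤ C)
    (hD3 : ∀ z : EuclideanSpace ℝ (Fin d), ‖iteratedFDeriv ℝ 3 U z‖ ≤ C) :
    ∃ C' : ℝ, 0 < C' ∧
      ∀ (h : ℝ), 0 < h → h ≤ 1 → ∀ (x : EuclideanSpace ℝ (Fin d)),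
      ∀ (Ω : Type) (mΩ : MeasurableSpace Ω) (P : Measure Ω)
        (_ : IsProbabilityMeasure P)
        (ξ₁ ξ₂ : Ω → EuclideanSpace ℝ (Fin d)),
        Measurable ξ₁ → Measurable ξ₂ →
        Integrable ξ₁ P → Integrable (fun ω => ‖ξ₁ ω‖ ^ 2) P →
        (∫ ω, ξ₁ ω ∂P) = 0 → (∫ ω, ‖ξ₁ ω‖ ^ 2 ∂P) = d →
        ∀ (xhalf xf xc : Ω → EuclideanSpace ℝ (Fin d)),
        (∀ ω, xhalf ω = x + (h / 2) • ∇ U x + Real.sqrt h • ξ₁ ω) →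
        (∀ ω, xf ω = xhalf ω + (h / 2) • ∇ U (xhalf ω) + Real.sqrt h • ξ₂ ω) →
        (∀ ω, xc ω = x + h • ∇ U x + Real.sqrt h • (ξ₁ ω + ξ₂ ω)) →
        ‖∫ ω, (xf ω - xc ω) ∂P‖ ≤
          C' * h ^ 2 *
            (1 + ‖x‖ + h * ‖x‖ ^ 2 + ‖∇ U 0‖ + h * ‖∇ U 0‖ ^ 2 + d) :=
  euler_coupling_one_step_weak_error_improved_general U hU L hL hlip C hC hD2 hD3
end

section
/- Let d ≥ 1 and let b : ℝ^d → ℝ^d satisfy ⟨b(x) − b(y), x − y⟩ ≤ −m‖x − y‖² for all x, y ∈ ℝ^d, with m > 0. Let h > 0 and suppose X, Y, x, y, η ∈ ℝ^d satisfy the implicit relations X = x + h b(X) + η and Y = y + h b(Y) + η. Then ‖X − Y‖² ≤ ‖x − y‖² / (1 + 2mh). -/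
open scoped RealInnerProductSpace

/-! Subtracting the two implicit relations cancels the common increment `η`, leaving
`x - y = (X - Y) - h • (b X - b Y)`. Expanding the square, the cross term
`-2h ⟪b X - b Y, X - Y⟫` is at least `2mh ‖X - Y‖²` by the one-sided Lipschitz condition and
the term `h² ‖b X - b Y‖²` is nonnegative, so `‖x - y‖² ≥ (1 + 2mh) ‖X - Y‖²`. -/

theorem one_add_mul_norm_sq_le_norm_sub_smul_sq {E : Type*} [NormedAddCommGroup E]
    [InnerProductSpace ℝ E] {m h : ℝ} (hh : 0 ≤ h) {u v : E} (huv : ⟪v, u⟫ ≤ -m * ‖u‖ ^ 2) :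
    (1 + 2 * m * h) * ‖u‖ ^ 2 ≤ ‖u - h • v‖ ^ 2 := by
  have hexpand : ‖u - h • v‖ ^ 2 = ‖u‖ ^ 2 - 2 * h * ⟪v, u⟫ + h ^ 2 * ‖v‖ ^ 2 := by
    rw [norm_sub_sq_real, real_inner_smul_right, real_inner_comm, norm_smul, mul_pow,
      Real.norm_eq_abs, sq_abs]
    ring
  rw [hexpand]
  nlinarith [mul_le_mul_of_nonneg_left huv hh, sq_nonneg h, sq_nonneg ‖v‖]

theorem sub_eq_sub_sub_smul_of_eq_add_smul_add {V : Type*} [AddCommGroup V] [Module ℝ V]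
    {f : V → V} {h : ℝ} {X Y x y η : V} (hX : X = x + h • f X + η) (hY : Y = y + h • f Y + η) :
    x - y = (X - Y) - h • (f X - f Y) := by
  rw [smul_sub]
  nth_rewrite 1 [hX, hY]
  abel

theorem implicit_euler_one_step_contraction_general
    {d : ℕ}
    (b : EuclideanSpace ℝ (Fin d) → EuclideanSpace ℝ (Fin d))
    (m : ℝ) (hm : 0 < m)
    (hmono : ∀ x y : EuclideanSpace ℝ (Fin d), ⟪b x - b y, x - y⟫ ≤ -m * ‖x - y‖ ^ 2)
    (h : ℝ) (hh : 0 < h)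
    (X Y x y η : EuclideanSpace ℝ (Fin d))
    (hX : X = x + h • b X + η)
    (hY : Y = y + h • b Y + η) :
    ‖X - Y‖ ^ 2 ≤ ‖x - y‖ ^ 2 / (1 + 2 * m * h) := by
  rw [le_div_iff₀ (by positivity), mul_comm, sub_eq_sub_sub_smul_of_eq_add_smul_add hX hY]
  exact one_add_mul_norm_sq_le_norm_sub_smul_sq hh.le (hmono X Y)

/-- L²-regularity (one-step contraction) of the implicit (backward) Euler
scheme under the one-sided Lipschitz condition; the common noise increment
cancels and the contraction is deterministic. -/
theorem implicit_euler_one_step_contraction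
    {d : ℕ} (hd : 1 ≤ d)
    (b : EuclideanSpace ℝ (Fin d) → EuclideanSpace ℝ (Fin d))
    (m : ℝ) (hm : 0 < m)
    (hmono : ∀ x y : EuclideanSpace ℝ (Fin d), ⟪b x - b y, x - y⟫ ≤ -m * ‖x - y‖ ^ 2)
    (h : ℝ) (hh : 0 < h)
    (X Y x y η : EuclideanSpace ℝ (Fin d))
    (hX : X = x + h • b X + η)
    (hY : Y = y + h • b Y + η) :
    ‖X - Y‖ ^ 2 ≤ ‖x - y‖ ^ 2 / (1 + 2 * m * h) :=
  implicit_euler_one_step_contraction_general b m hm hmono h hh X Y x y η hX hY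
end

section
/- Let d ≥ 1, N ≥ 1, s ≥ 1. Let c₀ : ℝ^d → ℝ^d be L₀-Lipschitz and satisfy ⟨c₀(x) − c₀(y), x − y⟩ ≤ −m₀‖x − y‖² for all x, y, and for each i ∈ {1,…,N} let c_i : ℝ^d → ℝ^d be L-Lipschitz and satisfy ⟨c_i(x) − c_i(y), x − y⟩ ≤ −m̲‖x − y‖² for all x, y, where m₀, m̲ ≥ 0 and m := m₀ + N m̲ > 0. For a subsample vector τ ∈ {1,…,N}^s define b(x, τ) := c₀(x) + (N/s) Σ_{j=1}^s c_{τ_j}(x). Then for every h > 0, every τ ∈ {1,…,N}^s and all x, y ∈ ℝ^d, ‖(x + h b(x,τ)) − (y + h b(y,τ))‖² ≤ (1 − (2m − (L₀ + NL)²h)h) ‖x − y‖². -/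
open scoped RealInnerProductSpace

/-!
For fixed `x, y` put `u = x - y` and `v = b x - b y`. Then
`‖u + h v‖² = ‖u‖² + 2h⟪v, u⟫ + h²‖v‖²`; strong monotonicity of `-b` bounds the cross term by
`-2hm‖u‖²` and the Lipschitz bound the last term by `h²K²‖u‖²`. Both properties pass to sums
and nonnegative multiples, so for every subsample the drift inherits them with `m = m₀ + N m̲`
and `K = L₀ + N L`.
-/

namespace SGLD

section Lipschitz

variable {E : Type*} [SeminormedAddCommGroup E]

/-- Unlike `LipschitzWith`, the constant is any real number. -/
def HasLipschitzBound (K : ℝ) (f : E → E) : Prop :=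
  ∀ x y, ‖f x - f y‖ ≤ K * ‖x - y‖

namespace HasLipschitzBound

variable {K K' a : ℝ} {f g : E → E}

theorem add (hf : HasLipschitzBound K f) (hg : HasLipschitzBound K' g) :
    HasLipschitzBound (K + K') (f + g) := fun x y =>
  calc ‖(f + g) x - (f + g) y‖ = ‖(f x - f y) + (g x - g y)‖ := by
        rw [Pi.add_apply, Pi.add_apply, add_sub_add_comm]
    _ ≤ ‖f x - f y‖ + ‖g x - g y‖ := norm_add_le _ _
    _ ≤ (K + K') * ‖x - y‖ := by rw [add_mul]; exact add_le_add (hf x y) (hg x y)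

theorem const_smul [NormedSpace ℝ E] (ha : 0 ≤ a) (hf : HasLipschitzBound K f) :
    HasLipschitzBound (a * K) (a • f) := fun x y => by
  rw [Pi.smul_apply, Pi.smul_apply, ← smul_sub, norm_smul, Real.norm_of_nonneg ha, mul_assoc]
  exact mul_le_mul_of_nonneg_left (hf x y) ha

theorem sum {ι : Type*} (t : Finset ι) {K : ι → ℝ} {f : ι → E → E}
    (hf : ∀ i ∈ t, HasLipschitzBound (K i) (f i)) :
    HasLipschitzBound (∑ i ∈ t, K i) (∑ i ∈ t, f i) := fun x y =>
  calc ‖(∑ i ∈ t, f i) x - (∑ i ∈ t, f i) y‖ = ‖∑ i ∈ t, (f i x - f i y)‖ := by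
        rw [Finset.sum_apply, Finset.sum_apply, Finset.sum_sub_distrib]
    _ ≤ ∑ i ∈ t, ‖f i x - f i y‖ := norm_sum_le _ _
    _ ≤ ∑ i ∈ t, K i * ‖x - y‖ := Finset.sum_le_sum fun i hi => hf i hi x y
    _ = (∑ i ∈ t, K i) * ‖x - y‖ := (Finset.sum_mul ..).symm

end HasLipschitzBound

end Lipschitz

variable {E : Type*} [NormedAddCommGroup E] [InnerProductSpace ℝ E]

/-- `-f` is `m`-strongly monotone. -/
def StronglyDissipative (m : ℝ) (f : E → E) : Prop :=
  ∀ x y, ⟪f x - f y, x - y⟫ ≤ -m * ‖x - y‖ ^ 2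

namespace StronglyDissipative

variable {m m' a : ℝ} {f g : E → E}

theorem add (hf : StronglyDissipative m f) (hg : StronglyDissipative m' g) :
    StronglyDissipative (m + m') (f + g) := fun x y => by
  have key := add_le_add (hf x y) (hg x y)
  rw [← inner_add_left] at key
  simpa only [Pi.add_apply, add_sub_add_comm, neg_add, add_mul] using key

theorem const_smul (ha : 0 ≤ a) (hf : StronglyDissipative m f) :
    StronglyDissipative (a * m) (a • f) := fun x y => by
  have key := mul_le_mul_of_nonneg_left (hf x y) ha
  simpa only [Pi.smul_apply, ← smul_sub, real_inner_smul_left, neg_mul, mul_neg,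
    mul_assoc] using key

theorem sum {ι : Type*} (t : Finset ι) {m : ι → ℝ} {f : ι → E → E}
    (hf : ∀ i ∈ t, StronglyDissipative (m i) (f i)) :
    StronglyDissipative (∑ i ∈ t, m i) (∑ i ∈ t, f i) := fun x y =>
  calc ⟪(∑ i ∈ t, f i) x - (∑ i ∈ t, f i) y, x - y⟫
      = ∑ i ∈ t, ⟪f i x - f i y, x - y⟫ := by
        rw [Finset.sum_apply, Finset.sum_apply, ← Finset.sum_sub_distrib, sum_inner]
    _ ≤ ∑ i ∈ t, -m i * ‖x - y‖ ^ 2 := Finset.sum_le_sum fun i hi => hf i hi x y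
    _ = -(∑ i ∈ t, m i) * ‖x - y‖ ^ 2 := by rw [← Finset.sum_mul, Finset.sum_neg_distrib]

end StronglyDissipative

theorem norm_add_smul_sq_le {u v : E} {m K h : ℝ} (hh : 0 ≤ h)
    (hvu : ⟪v, u⟫ ≤ -m * ‖u‖ ^ 2) (hv : ‖v‖ ≤ K * ‖u‖) :
    ‖u + h • v‖ ^ 2 ≤ (1 - (2 * m - K ^ 2 * h) * h) * ‖u‖ ^ 2 := by
  have hv_sq : ‖v‖ ^ 2 ≤ K ^ 2 * ‖u‖ ^ 2 := by
    rw [← mul_pow]; exact pow_le_pow_left₀ (norm_nonneg v) hv 2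
  calc ‖u + h • v‖ ^ 2 = ‖u‖ ^ 2 + 2 * h * ⟪v, u⟫ + h ^ 2 * ‖v‖ ^ 2 := by
        rw [norm_add_sq_real, real_inner_smul_right, norm_smul, Real.norm_of_nonneg hh,
          real_inner_comm, mul_pow, mul_assoc]
    _ ≤ ‖u‖ ^ 2 + 2 * h * (-m * ‖u‖ ^ 2) + h ^ 2 * (K ^ 2 * ‖u‖ ^ 2) := by gcongr
    _ = (1 - (2 * m - K ^ 2 * h) * h) * ‖u‖ ^ 2 := by ring

theorem norm_eulerStep_sub_sq_le {b : E → E} {m K h : ℝ} (hh : 0 ≤ h)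
    (hmono : StronglyDissipative m b) (hlip : HasLipschitzBound K b) (x y : E) :
    ‖(x + h • b x) - (y + h • b y)‖ ^ 2 ≤ (1 - (2 * m - K ^ 2 * h) * h) * ‖x - y‖ ^ 2 := by
  rw [add_sub_add_comm, ← smul_sub]
  exact norm_add_smul_sq_le hh (hmono x y) (hlip x y)

end SGLD

open SGLD in
theorem sgld_one_step_contraction_general
    {d : ℕ} (N s : ℕ) (hs : 1 ≤ s)
    (c₀ : EuclideanSpace ℝ (Fin d) → EuclideanSpace ℝ (Fin d))
    (c : Fin N → EuclideanSpace ℝ (Fin d) → EuclideanSpace ℝ (Fin d))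
    (L₀ L m₀ mlow : ℝ)
    (hc₀_lip : ∀ x y : EuclideanSpace ℝ (Fin d), ‖c₀ x - c₀ y‖ ≤ L₀ * ‖x - y‖)
    (hc₀_mono : ∀ x y : EuclideanSpace ℝ (Fin d),
      ⟪c₀ x - c₀ y, x - y⟫ ≤ -m₀ * ‖x - y‖ ^ 2)
    (hc_lip : ∀ i : Fin N, ∀ x y : EuclideanSpace ℝ (Fin d),
      ‖c i x - c i y‖ ≤ L * ‖x - y‖)
    (hc_mono : ∀ i : Fin N, ∀ x y : EuclideanSpace ℝ (Fin d),
      ⟪c i x - c i y, x - y⟫ ≤ -mlow * ‖x - y‖ ^ 2) :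
    ∀ (h : ℝ), 0 < h → ∀ (τ : Fin s → Fin N) (x y : EuclideanSpace ℝ (Fin d)),
      ‖(x + h • (c₀ x + ((N : ℝ) / s) • ∑ j : Fin s, c (τ j) x)) -
        (y + h • (c₀ y + ((N : ℝ) / s) • ∑ j : Fin s, c (τ j) y))‖ ^ 2 ≤
        (1 - (2 * (m₀ + N * mlow) - (L₀ + N * L) ^ 2 * h) * h) * ‖x - y‖ ^ 2 := by
  intro h hh τ x y
  have hweight : 0 ≤ (N : ℝ) / s := by positivity
  have hweight_sum (a : ℝ) : (N : ℝ) / s * ∑ _j : Fin s, a = N * a := by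
    have hs₀ : (s : ℝ) ≠ 0 := by positivity
    rw [Finset.sum_const, Finset.card_univ, Fintype.card_fin, nsmul_eq_mul, ← mul_assoc,
      div_mul_cancel₀ _ hs₀]
  set b := c₀ + ((N : ℝ) / s) • ∑ j : Fin s, c (τ j)
  have hmono : StronglyDissipative (m₀ + N * mlow) b := by
    rw [← hweight_sum]
    exact StronglyDissipative.add hc₀_mono <|
      (StronglyDissipative.sum _ fun j _ => hc_mono (τ j)).const_smul hweight
  have hlip : HasLipschitzBound (L₀ + N * L) b := by
    rw [← hweight_sum]
    exact HasLipschitzBound.add hc₀_lip <|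
      (HasLipschitzBound.sum _ fun j _ => hc_lip (τ j)).const_smul hweight
  simpa only [b, Pi.add_apply, Pi.smul_apply, Finset.sum_apply] using
    norm_eulerStep_sub_sq_le hh.le hmono hlip x y

/-- L²-regularity (one-step contraction) of the SGLD drift map: for any fixed
subsample `τ`, the subsampled drift is `(L₀ + N·L)`-Lipschitz and `m`-strongly
monotone, so the Euler step with subsampled drift contracts. -/
theorem sgld_one_step_contraction
    {d : ℕ} (hd : 1 ≤ d) (N s : ℕ) (hN : 1 ≤ N) (hs : 1 ≤ s)
    (c₀ : EuclideanSpace ℝ (Fin d) → EuclideanSpace ℝ (Fin d))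
    (c : Fin N → EuclideanSpace ℝ (Fin d) → EuclideanSpace ℝ (Fin d))
    (L₀ L m₀ mlow : ℝ)
    (hm₀ : 0 ≤ m₀) (hmlow : 0 ≤ mlow)
    (hm : 0 < m₀ + N * mlow)
    (hc₀_lip : ∀ x y : EuclideanSpace ℝ (Fin d), ‖c₀ x - c₀ y‖ ≤ L₀ * ‖x - y‖)
    (hc₀_mono : ∀ x y : EuclideanSpace ℝ (Fin d),
      ⟪c₀ x - c₀ y, x - y⟫ ≤ -m₀ * ‖x - y‖ ^ 2)
    (hc_lip : ∀ i : Fin N, ∀ x y : EuclideanSpace ℝ (Fin d),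
      ‖c i x - c i y‖ ≤ L * ‖x - y‖)
    (hc_mono : ∀ i : Fin N, ∀ x y : EuclideanSpace ℝ (Fin d),
      ⟪c i x - c i y, x - y⟫ ≤ -mlow * ‖x - y‖ ^ 2) :
    ∀ (h : ℝ), 0 < h → ∀ (τ : Fin s → Fin N) (x y : EuclideanSpace ℝ (Fin d)),
      ‖(x + h • (c₀ x + ((N : ℝ) / s) • ∑ j : Fin s, c (τ j) x)) -
        (y + h • (c₀ y + ((N : ℝ) / s) • ∑ j : Fin s, c (τ j) y))‖ ^ 2 ≤
        (1 - (2 * (m₀ + N * mlow) - (L₀ + N * L) ^ 2 * h) * h) * ‖x - y‖ ^ 2 :=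
  sgld_one_step_contraction_general N s hs c₀ c L₀ L m₀ mlow hc₀_lip hc₀_mono hc_lip hc_mono
end

section
/- Let d ≥ 1, N ≥ 1, s ≥ 1, let v₁, …, v_N ∈ ℝ^d, let τ₁, …, τ_{2s} be i.i.d. random variables uniformly distributed on {1, …, N}, and let S be a uniformly distributed random s-element subset of {1, …, 2s}, independent of (τ₁, …, τ_{2s}). Set T₁ = Σ_{j=1}^s v_{τ_j}, T₂ = Σ_{j=s+1}^{2s} v_{τ_j}, and T₃ = 2 Σ_{k∈S} v_{τ_k}. Then E‖T₁ + T₂ − T₃‖² = (2s/N) Σ_{i=1}^N ‖v_i‖² − (2s/N²) ‖Σ_{i=1}^N v_i‖². -/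
open MeasureTheory

/-!
With signs `ε k = -1` for `k ∈ S` and `ε k = 1` otherwise, `T₁ + T₂ - T₃ = ∑ k, ε k • v (τ k)`,
and `∑ k, ε k = 0` because `#S = s`. Since `S` is independent of `τ`, we may freeze the signs.
For fixed signs summing to zero, expanding the square and using pairwise independence of the
uniform indices gives `(∑ k, ε k ^ 2)` times the variance `N⁻¹ ∑ ‖v i‖² - ‖N⁻¹ ∑ v i‖²`, and
`∑ k, ε k ^ 2 = 2s`.
-/

open ProbabilityTheory Finset

theorem sum_sum_mul_mul_ite_eq {ι R : Type*} [Fintype ι] [DecidableEq ι] [CommRing R]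
    (c : ι → R) (x y : R) :
    ∑ j, ∑ k, c j * c k * (if j = k then x else y) =
      (∑ j, c j) ^ 2 * y + (∑ j, c j ^ 2) * (x - y) := by
  calc ∑ j, ∑ k, c j * c k * (if j = k then x else y)
      = ∑ j, ∑ k, (c j * c k * y + if j = k then c j * c k * (x - y) else 0) := by
        refine sum_congr rfl fun j _ => sum_congr rfl fun k _ => ?_
        split_ifs <;> ring
    _ = (∑ j, c j) ^ 2 * y + (∑ j, c j ^ 2) * (x - y) := by
        simp [sum_add_distrib, ← sum_mul, ← mul_sum, sq]

theorem sum_sub_two_smul_sum_eq_sum_sign_smul {ι R E : Type*} [Fintype ι] [DecidableEq ι]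
    [Ring R] [AddCommGroup E] [Module R E] (u : ι → E) (A : Finset ι) :
    ∑ k, u k - (2 : R) • ∑ k ∈ A, u k = ∑ k, (if k ∈ A then -1 else 1 : R) • u k := by
  rw [smul_sum, ← sum_ite_mem_eq A, ← sum_sub_distrib]
  refine sum_congr rfl fun k _ => ?_
  split_ifs
  · rw [neg_one_smul, two_smul]; abel
  · rw [sub_zero, one_smul]

theorem sum_sign_eq_zero {ι R : Type*} [Fintype ι] [DecidableEq ι] [Ring R] {A : Finset ι}
    (hA : 2 * #A = Fintype.card ι) : ∑ k, (if k ∈ A then -1 else 1 : R) = 0 := by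
  rw [sum_ite, sum_const, sum_const, filter_not, card_sdiff_of_subset (filter_subset _ _),
    card_univ, ← hA]
  simp [show 2 * #A - #A = #A by omega]

theorem norm_sum_smul_sq {ι E : Type*} [Fintype ι] [NormedAddCommGroup E]
    [InnerProductSpace ℝ E] (c : ι → ℝ) (u : ι → E) :
    ‖∑ j, c j • u j‖ ^ 2 = ∑ j, ∑ k, c j * c k * inner ℝ (u j) (u k) := by
  simp_rw [← real_inner_self_eq_norm_sq, sum_inner, inner_sum, real_inner_smul_left,
    real_inner_smul_right, mul_assoc]

section FiniteRange

variable {Ω α : Type*} [MeasurableSpace Ω] {P : Measure Ω} [MeasurableSpace α]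
  [MeasurableSingletonClass α] {g : Ω → α}

theorem integrable_comp_of_finite [Finite α] [IsFiniteMeasure P] (hg : Measurable g)
    (φ : α → ℝ) : Integrable (fun ω => φ (g ω)) P :=
  (Integrable.of_finite (μ := P.map g)).comp_measurable hg

variable [Fintype α]

theorem integral_comp_eq_sum_measureReal [IsFiniteMeasure P] (hg : Measurable g) (φ : α → ℝ) :
    ∫ ω, φ (g ω) ∂P = ∑ a, P.real (g ⁻¹' {a}) * φ a := by
  rw [← integral_map hg.aemeasurable (measurable_of_finite φ).aestronglyMeasurable,
    integral_fintype Integrable.of_finite]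
  simp only [map_measureReal_apply hg (measurableSet_singleton _), smul_eq_mul]

theorem integral_comp_of_uniform [IsFiniteMeasure P] (hg : Measurable g)
    (hunif : ∀ a, P (g ⁻¹' {a}) = (Fintype.card α : ENNReal)⁻¹) (φ : α → ℝ) :
    ∫ ω, φ (g ω) ∂P = (Fintype.card α : ℝ)⁻¹ * ∑ a, φ a := by
  simp [integral_comp_eq_sum_measureReal hg, measureReal_def, hunif, mul_sum]

theorem integral_comp₂_of_uniform_of_indepFun [IsFiniteMeasure P] {g₁ g₂ : Ω → α}
    (hg₁ : Measurable g₁) (hg₂ : Measurable g₂) (hind : IndepFun g₁ g₂ P)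
    (hunif₁ : ∀ a, P (g₁ ⁻¹' {a}) = (Fintype.card α : ENNReal)⁻¹)
    (hunif₂ : ∀ a, P (g₂ ⁻¹' {a}) = (Fintype.card α : ENNReal)⁻¹) (φ : α → α → ℝ) :
    ∫ ω, φ (g₁ ω) (g₂ ω) ∂P = (Fintype.card α : ℝ)⁻¹ ^ 2 * ∑ a, ∑ b, φ a b := by
  have hunif : ∀ p : α × α, P ((fun ω => (g₁ ω, g₂ ω)) ⁻¹' {p}) =
      (Fintype.card (α × α) : ENNReal)⁻¹ := by
    rintro ⟨a, b⟩
    have hpre : (fun ω => (g₁ ω, g₂ ω)) ⁻¹' {(a, b)} = g₁ ⁻¹' {a} ∩ g₂ ⁻¹' {b} := by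
      ext ω; simp
    rw [hpre, hind.measure_inter_preimage_eq_mul _ _ (measurableSet_singleton a)
      (measurableSet_singleton b), hunif₁, hunif₂, Fintype.card_prod, Nat.cast_mul,
      ENNReal.mul_inv (.inr (ENNReal.natCast_ne_top _)) (.inl (ENNReal.natCast_ne_top _))]
  rw [integral_comp_of_uniform (hg₁.prodMk hg₂) hunif (fun p => φ p.1 p.2),
    Fintype.card_prod, Fintype.sum_prod_type, Nat.cast_mul, mul_inv, sq]

theorem integral_comp_eq_const_of_indepFun [IsProbabilityMeasure P] {β : Type*} [MeasurableSpace β]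
    {X : Ω → α} {Y : Ω → β} (hX : Measurable X) (hXY : IndepFun X Y P) {F : α → β → ℝ}
    (hF : ∀ a, Measurable (F a)) (hFY : ∀ a, Integrable (fun ω => F a (Y ω)) P) {c : ℝ}
    (hc : ∀ ω, ∫ ω', F (X ω) (Y ω') ∂P = c) :
    ∫ ω, F (X ω) (Y ω) ∂P = c := by
  have hfiber : ∀ a, ∫ ω, (X ⁻¹' {a}).indicator (fun ω => F a (Y ω)) ω ∂P =
      P.real (X ⁻¹' {a}) * c := by
    intro a
    have hmul : (X ⁻¹' {a}).indicator (fun ω => F a (Y ω)) =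
        fun ω => (X ⁻¹' {a}).indicator 1 ω * F a (Y ω) := by
      ext ω; by_cases h : X ω = a <;> simp [Set.indicator, h]
    have hind : IndepFun ((X ⁻¹' {a}).indicator (1 : Ω → ℝ)) (fun ω => F a (Y ω)) P :=
      hXY.comp (φ := ({a} : Set α).indicator 1) (measurable_of_finite _) (hF a)
    rw [hmul, hind.integral_fun_mul_eq_mul_integral
      ((integrable_const 1).indicator (hX (measurableSet_singleton a))).aestronglyMeasurable
      (hFY a).aestronglyMeasurable, integral_indicator_one (hX (measurableSet_singleton a))]
    rcases (X ⁻¹' {a}).eq_empty_or_nonempty with hempty | ⟨ω, hω⟩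
    · simp [hempty]
    · rw [← hω, hc ω]
  calc ∫ ω, F (X ω) (Y ω) ∂P
      = ∫ ω, ∑ a, (X ⁻¹' {a}).indicator (fun ω => F a (Y ω)) ω ∂P := by
        congr with ω
        rw [sum_eq_single (X ω) (fun a _ ha => by simp [Ne.symm ha]) (by simp)]
        simp
    _ = ∑ a, P.real (X ⁻¹' {a}) * c := by
        rw [integral_finsetSum _ fun a _ => (hFY a).indicator (hX (measurableSet_singleton a))]
        exact sum_congr rfl fun a _ => hfiber a
    _ = c := by
        rw [← sum_mul, sum_measureReal_preimage_singleton _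
          fun a _ => hX (measurableSet_singleton a)]
        simp

end FiniteRange

section Variance

variable {Ω α ι E : Type*} [MeasurableSpace Ω] {P : Measure Ω} [IsFiniteMeasure P]
  [MeasurableSpace α] [MeasurableSingletonClass α] [Fintype α] [Fintype ι]
  [NormedAddCommGroup E] [InnerProductSpace ℝ E]

theorem integral_norm_sum_smul_sq_of_sum_eq_zero {u : ι → Ω → α} (hu : ∀ j, Measurable (u j))
    (hind : Pairwise fun j k => IndepFun (u j) (u k) P)
    (hunif : ∀ j a, P (u j ⁻¹' {a}) = (Fintype.card α : ENNReal)⁻¹) (v : α → E) {c : ι → ℝ}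
    (hc : ∑ j, c j = 0) :
    ∫ ω, ‖∑ j, c j • v (u j ω)‖ ^ 2 ∂P =
      (∑ j, c j ^ 2) * ((Fintype.card α : ℝ)⁻¹ * ∑ a, ‖v a‖ ^ 2 -
        (Fintype.card α : ℝ)⁻¹ ^ 2 * ‖∑ a, v a‖ ^ 2) := by
  classical
  have hint : ∀ j k, Integrable (fun ω => inner ℝ (v (u j ω)) (v (u k ω))) P := fun j k =>
    integrable_comp_of_finite ((hu j).prodMk (hu k)) fun p => inner ℝ (v p.1) (v p.2)
  have hmoment : ∀ j k, ∫ ω, inner ℝ (v (u j ω)) (v (u k ω)) ∂P =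
      if j = k then (Fintype.card α : ℝ)⁻¹ * ∑ a, ‖v a‖ ^ 2
      else (Fintype.card α : ℝ)⁻¹ ^ 2 * ‖∑ a, v a‖ ^ 2 := by
    intro j k
    split_ifs with hjk
    · subst hjk
      simp_rw [real_inner_self_eq_norm_sq]
      exact integral_comp_of_uniform (hu j) (hunif j) fun a => ‖v a‖ ^ 2
    · rw [integral_comp₂_of_uniform_of_indepFun (hu j) (hu k) (hind hjk) (hunif j) (hunif k)
          fun a b => inner ℝ (v a) (v b),
        ← real_inner_self_eq_norm_sq, sum_inner]
      simp_rw [inner_sum]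
  calc ∫ ω, ‖∑ j, c j • v (u j ω)‖ ^ 2 ∂P
      = ∫ ω, ∑ j, ∑ k, c j * c k * inner ℝ (v (u j ω)) (v (u k ω)) ∂P := by
        simp_rw [norm_sum_smul_sq]
    _ = ∑ j, ∑ k, c j * c k * ∫ ω, inner ℝ (v (u j ω)) (v (u k ω)) ∂P := by
        rw [integral_finsetSum _ fun j _ => integrable_finsetSum _ fun k _ =>
          (hint j k).const_mul _]
        refine sum_congr rfl fun j _ => ?_
        rw [integral_finsetSum _ fun k _ => (hint j k).const_mul _]
        simp_rw [integral_const_mul]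
    _ = _ := by
        simp_rw [hmoment, sum_sum_mul_mul_ite_eq, hc]
        ring

end Variance

theorem sgld_union_coupling_identity_general
    {Ω : Type*} [mΩ : MeasurableSpace Ω] (P : Measure Ω) [IsProbabilityMeasure P]
    {d : ℕ} (N s : ℕ)
    (v : Fin N → EuclideanSpace ℝ (Fin d))
    (τ : Fin (s + s) → Ω → Fin N)
    (S : Ω → Finset (Fin (s + s)))
    (hτ_meas : ∀ j, Measurable (τ j))
    (hS_meas : @Measurable Ω (Finset (Fin (s + s))) mΩ ⊤ S)
    (hτ_iid : ProbabilityTheory.iIndepFun τ P)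
    (hτ_unif : ∀ (j : Fin (s + s)) (i : Fin N), P (τ j ⁻¹' {i}) = (N : ENNReal)⁻¹)
    (hS_card : ∀ ω, (S ω).card = s)
    (hS_indep : ProbabilityTheory.Indep
      (MeasurableSpace.comap (fun ω (j : Fin (s + s)) => τ j ω) MeasurableSpace.pi)
      (MeasurableSpace.comap S ⊤) P) :
    (∫ ω, ‖(∑ j : Fin s, v (τ (Fin.castAdd s j) ω)) +
            (∑ j : Fin s, v (τ (Fin.natAdd s j) ω)) -
            (2:ℝ) • ∑ k ∈ S ω, v (τ k ω)‖ ^ 2 ∂P) =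
      (2 * (s : ℝ) / N) * ∑ i : Fin N, ‖v i‖ ^ 2 -
      (2 * (s : ℝ) / N ^ 2) * ‖∑ i : Fin N, v i‖ ^ 2 := by
  let : MeasurableSpace (Finset (Fin (s + s))) := ⊤
  have hτ_vec : Measurable fun ω (j : Fin (s + s)) => τ j ω := measurable_pi_lambda _ hτ_meas
  have hτS : IndepFun S (fun ω (j : Fin (s + s)) => τ j ω) P := Indep.symm hS_indep
  have hτ_unif_card : ∀ j i, P (τ j ⁻¹' {i}) = (Fintype.card (Fin N) : ENNReal)⁻¹ := by
    simpa using hτ_unif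
  let sqErr : Finset (Fin (s + s)) → (Fin (s + s) → Fin N) → ℝ := fun A t =>
    ‖(∑ j : Fin s, v (t (Fin.castAdd s j))) + (∑ j : Fin s, v (t (Fin.natAdd s j))) -
      (2:ℝ) • ∑ k ∈ A, v (t k)‖ ^ 2
  change ∫ ω, sqErr (S ω) (fun j => τ j ω) ∂P = _
  refine integral_comp_eq_const_of_indepFun hS_meas hτS (fun _ => measurable_of_finite _)
    (fun A => integrable_comp_of_finite hτ_vec (sqErr A)) fun ω => ?_
  have hsign : ∑ k, (if k ∈ S ω then -1 else 1 : ℝ) = 0 :=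
    sum_sign_eq_zero (by rw [hS_card, Fintype.card_fin]; ring)
  have hsign_sq : ∑ k : Fin (s + s), (if k ∈ S ω then -1 else 1 : ℝ) ^ 2 = s + s := by
    simp [apply_ite (· ^ 2)]
  have hsqErr : ∀ ω', sqErr (S ω) (fun j => τ j ω') =
      ‖∑ k, (if k ∈ S ω then -1 else 1 : ℝ) • v (τ k ω')‖ ^ 2 := fun ω' => by
    rw [← sum_sub_two_smul_sum_eq_sum_sign_smul, Fin.sum_univ_add]
  simp only [hsqErr]
  rw [integral_norm_sum_smul_sq_of_sum_eq_zero hτ_meas (fun j k h => hτ_iid.indepFun h)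
    hτ_unif_card v hsign, hsign_sq, Fintype.card_fin]
  ring

/-- One-step subsampling variance identity for the *union coupling* in
multilevel SGLD: the coarse minibatch is a uniform `s`-element subset `S` of
the `2s` fine indices, independent of the fine minibatches `τ`, and
`E‖T₁ + T₂ − T₃‖² = (2s/N) Σ_i ‖v_i‖² − (2s/N²) ‖Σ_i v_i‖²`. -/
theorem sgld_union_coupling_identity
    {Ω : Type*} [mΩ : MeasurableSpace Ω] (P : Measure Ω) [IsProbabilityMeasure P]
    {d : ℕ} (hd : 1 ≤ d) (N s : ℕ) (hN : 1 ≤ N) (hs : 1 ≤ s)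
    (v : Fin N → EuclideanSpace ℝ (Fin d))
    (τ : Fin (s + s) → Ω → Fin N)
    (S : Ω → Finset (Fin (s + s)))
    (hτ_meas : ∀ j, Measurable (τ j))
    (hS_meas : @Measurable Ω (Finset (Fin (s + s))) mΩ ⊤ S)
    (hτ_iid : ProbabilityTheory.iIndepFun τ P)
    (hτ_unif : ∀ (j : Fin (s + s)) (i : Fin N), P (τ j ⁻¹' {i}) = (N : ENNReal)⁻¹)
    (hS_card : ∀ ω, (S ω).card = s)
    (hS_unif : ∀ A : Finset (Fin (s + s)), A.card = s →
      P (S ⁻¹' {A}) = ((s + s).choose s : ENNReal)⁻¹)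
    (hS_indep : ProbabilityTheory.Indep
      (MeasurableSpace.comap (fun ω (j : Fin (s + s)) => τ j ω) MeasurableSpace.pi)
      (MeasurableSpace.comap S ⊤) P) :
    (∫ ω, ‖(∑ j : Fin s, v (τ (Fin.castAdd s j) ω)) +
            (∑ j : Fin s, v (τ (Fin.natAdd s j) ω)) -
            (2:ℝ) • ∑ k ∈ S ω, v (τ k ω)‖ ^ 2 ∂P) =
      (2 * (s : ℝ) / N) * ∑ i : Fin N, ‖v i‖ ^ 2 -
      (2 * (s : ℝ) / N ^ 2) * ‖∑ i : Fin N, v i‖ ^ 2 :=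
  sgld_union_coupling_identity_general (mΩ := mΩ) P N s v τ S hτ_meas hS_meas hτ_iid hτ_unif hS_card
    hS_indep
end

section
/- Let (Ω, 𝓕, P) be a probability space, let (Δ_j)_{j≥0} be integrable real-valued random variables, and let M : Ω → ℕ be a random variable independent of the σ-algebra generated by (Δ_j)_{j≥0}, such that P(M ≥ j) > 0 for every j ∈ ℕ and Σ_{j=0}^∞ E|Δ_j| / P(M ≥ j) < ∞. Then the random variable Z := Σ_{j=0}^{M} Δ_j / P(M ≥ j) is integrable and E[Z] = Σ_{j=0}^∞ E[Δ_j]. -/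
/-!
Weight the `j`-th correction by the indicator of `{j ≤ M}` divided by `P(M ≥ j)`, so that
`Z = ∑' j, 1_{j ≤ M} Δ_j / P(M ≥ j)`. Since `{j ≤ M}` is independent of `Δ_j`, each weighted term
has the same mean as `Δ_j` and the same absolute mean as `|Δ_j|`; summability of `E|Δ_j|` then
lets the expectation pass through the series.
-/

open MeasureTheory ProbabilityTheory

namespace MeasureTheory

variable {α E : Type*} {_ : MeasurableSpace α} {μ : Measure α}
  [NormedAddCommGroup E] [CompleteSpace E]

theorem integrable_tsum_of_summable_integral_norm {ι : Type*} [Countable ι] {F : ι → α → E}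
    (hF_int : ∀ i, Integrable (F i) μ) (hF_sum : Summable fun i ↦ ∫ a, ‖F i a‖ ∂μ) :
    Integrable (fun a ↦ ∑' i, F i a) μ := by
  refine ⟨.tsum fun i ↦ (hF_int i).1, ?_⟩
  have h_nonneg (i : ι) : 0 ≤ ∫ a, ‖F i a‖ ∂μ := integral_nonneg fun a ↦ norm_nonneg _
  calc ∫⁻ a, ‖∑' i, F i a‖ₑ ∂μ
      ≤ ∫⁻ a, ∑' i, ‖F i a‖ₑ ∂μ := lintegral_mono fun a ↦ enorm_tsum_le_tsum_enorm
    _ = ∑' i, ENNReal.ofReal (∫ a, ‖F i a‖ ∂μ) := by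
      rw [lintegral_tsum fun i ↦ (hF_int i).1.enorm]
      simp_rw [ofReal_integral_norm_eq_lintegral_enorm (hF_int _)]
    _ < ⊤ := by
      rw [← ENNReal.ofReal_tsum_of_nonneg h_nonneg hF_sum]
      exact ENNReal.ofReal_lt_top

end MeasureTheory

namespace ProbabilityTheory

variable {Ω 𝓧 : Type*} {m mΩ : MeasurableSpace Ω} {P : Measure Ω} [IsFiniteMeasure P]
  [m𝓧 : MeasurableSpace 𝓧] {X : Ω → 𝓧} {A : Set Ω}

lemma Indep.integral_indicator_div_measureReal (hm : m ≤ mΩ) {f : 𝓧 → ℝ}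
    (hA_indep : Indep m (m𝓧.comap X) P) (hX : AEMeasurable X P) (hA : MeasurableSet[m] A)
    (hA_pos : P A ≠ 0) (hf : AEStronglyMeasurable f (P.map X)) :
    ∫ ω, A.indicator (fun ω ↦ f (X ω) / P.real A) ω ∂P = ∫ ω, f (X ω) ∂P := by
  rw [integral_indicator (hm A hA), integral_div,
    hA_indep.setIntegral_eq_mul hm hX hA hf, mul_div_cancel_left₀ _]
  exact (measureReal_ne_zero_iff (measure_ne_top P A)).2 hA_pos

end ProbabilityTheory

theorem tsum_indicator_le_eq_sum_range {Ω α : Type*} [AddCommMonoid α] [TopologicalSpace α]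
    (G : ℕ → Ω → α) (M : Ω → ℕ) (ω : Ω) :
    ∑' j, {ω | j ≤ M ω}.indicator (G j) ω = ∑ j ∈ Finset.range (M ω + 1), G j ω := by
  simp only [Set.indicator_apply, Set.mem_ofPred_eq]
  rw [tsum_eq_sum (s := Finset.range (M ω + 1)) fun j hj ↦
    if_neg fun h ↦ hj (Finset.mem_range.2 (Nat.lt_succ_of_le h))]
  exact Finset.sum_congr rfl fun j hj ↦ if_pos (Nat.lt_succ_iff.1 (Finset.mem_range.1 hj))

/-- Randomized-truncation (unbiasing) identity: if the random truncation level
`M` is independent of the multilevel corrections `(Δ_j)` and the weighted sum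
of first absolute moments converges, then `Z = Σ_{j=0}^{M} Δ_j / P(M ≥ j)` is
integrable with `E[Z] = Σ_j E[Δ_j]`. -/
theorem randomized_unbiasing
    {Ω : Type*} [MeasurableSpace Ω] (P : Measure Ω) [IsProbabilityMeasure P]
    (Δ : ℕ → Ω → ℝ)
    (hΔ_int : ∀ j, Integrable (Δ j) P)
    (M : Ω → ℕ) (hM_meas : Measurable M)
    (hM_indep : ProbabilityTheory.Indep
      (MeasurableSpace.comap M inferInstance)
      (⨆ j : ℕ, MeasurableSpace.comap (Δ j) inferInstance) P)
    (hM_pos : ∀ j : ℕ, 0 < P {ω | j ≤ M ω})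
    (h_sum : Summable fun j : ℕ =>
      (∫ ω, |Δ j ω| ∂P) / (P {ω | j ≤ M ω}).toReal) :
    Integrable (fun ω => ∑ j ∈ Finset.range (M ω + 1),
        Δ j ω / (P {ω' | j ≤ M ω'}).toReal) P ∧
    (∫ ω, (∑ j ∈ Finset.range (M ω + 1),
        Δ j ω / (P {ω' | j ≤ M ω'}).toReal) ∂P) =
      ∑' j : ℕ, ∫ ω, Δ j ω ∂P := by
  set F : ℕ → Ω → ℝ := fun j ↦ {ω | j ≤ M ω}.indicator fun ω ↦ Δ j ω / P.real {ω | j ≤ M ω}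
  have hZ : (fun ω ↦ ∑ j ∈ Finset.range (M ω + 1), Δ j ω / (P {ω' | j ≤ M ω'}).toReal) =
      fun ω ↦ ∑' j, F j ω :=
    funext fun ω ↦
      (tsum_indicator_le_eq_sum_range (fun j ω ↦ Δ j ω / P.real {ω | j ≤ M ω}) M ω).symm
  have h_indep (j : ℕ) : Indep (MeasurableSpace.comap M inferInstance)
      (MeasurableSpace.comap (Δ j) inferInstance) P :=
    indep_of_indep_of_le_right hM_indep (le_iSup (fun j ↦ MeasurableSpace.comap (Δ j) _) j)
  have h_mean (j : ℕ) {f : ℝ → ℝ} (hf : Measurable f) :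
      ∫ ω, {ω | j ≤ M ω}.indicator (fun ω ↦ f (Δ j ω) / P.real {ω | j ≤ M ω}) ω ∂P =
        ∫ ω, f (Δ j ω) ∂P :=
    (h_indep j).integral_indicator_div_measureReal hM_meas.comap_le
      (hΔ_int j).aemeasurable ⟨Set.Ici j, measurableSet_Ici, rfl⟩ (hM_pos j).ne'
      hf.aestronglyMeasurable
  have hF_int (j : ℕ) : Integrable (F j) P :=
    ((hΔ_int j).div_const _).indicator (hM_meas measurableSet_Ici)
  have hF_norm (j : ℕ) : ∫ ω, ‖F j ω‖ ∂P = ∫ ω, |Δ j ω| ∂P := by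
    simp_rw [F, norm_indicator_eq_indicator_norm, norm_div, Real.norm_of_nonneg measureReal_nonneg]
    exact h_mean j measurable_norm
  have hF_sum : Summable fun j ↦ ∫ ω, ‖F j ω‖ ∂P := by
    simp_rw [hF_norm]
    refine h_sum.of_nonneg_of_le (fun j ↦ integral_nonneg fun ω ↦ abs_nonneg _) fun j ↦ ?_
    exact le_div_self (integral_nonneg fun ω ↦ abs_nonneg _)
      (ENNReal.toReal_pos (hM_pos j).ne' (measure_ne_top P _)) measureReal_le_one
  rw [hZ]
  exact ⟨integrable_tsum_of_summable_integral_norm hF_int hF_sum,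
    (integral_tsum_of_summable_integral_norm hF_int hF_sum).symm.trans
      (tsum_congr fun j ↦ h_mean j measurable_id)⟩
end
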